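/- Assume the fundamental domain 𝒳 ⊂ ℍ has a nonzero interior point, and let t ≥ 0 be a real number. Then there exists a constant C_t > 0 (depending only on 𝒳 and t) such that for every q ∈ ℍ with |q| > 1 and all α, β ∈ (0,1) satisfying αβ|q| = 1 and C_t·β ≤ 1 (equivalently C_t·|q|^{−1} ≤ α), the set {z ∈ 𝒳 : some digit d of 𝕕_q(z) satisfies |d| ≤ t} is (α,β)-losing for Schmidt's game played on 𝒳. -/

import Mathlib

/-- The digit map of the `(q, 𝓛, 𝒳)`-expansion on the quaternions: `d(z)` is the unique
element of the lattice `L` with `q z − d(z) ∈ X`. -/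
noncomputable def qdg (L : AddSubgroup (Quaternion ℝ)) (X : Set (Quaternion ℝ))
    (hfund : ∀ w : Quaternion ℝ, ∃! d, d ∈ L ∧ w - d ∈ X) (q z : Quaternion ℝ) :
    Quaternion ℝ :=
  (hfund (q * z)).choose

/-- The transformation `𝕋 z = q z − d(z)`. -/
noncomputable def qT (L : AddSubgroup (Quaternion ℝ)) (X : Set (Quaternion ℝ))
    (hfund : ∀ w : Quaternion ℝ, ∃! d, d ∈ L ∧ w - d ∈ X) (q z : Quaternion ℝ) :
    Quaternion ℝ :=
  q * z - qdg L X hfund q z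

/-- `qdig … n z` is the `(n+1)`-th digit `d_{n+1}(z) = d(𝕋^[n] z)` of the `q`-expansion. -/
noncomputable def qdig (L : AddSubgroup (Quaternion ℝ)) (X : Set (Quaternion ℝ))
    (hfund : ∀ w : Quaternion ℝ, ∃! d, d ∈ L ∧ w - d ∈ X) (q : Quaternion ℝ) (n : ℕ)
    (z : Quaternion ℝ) : Quaternion ℝ :=
  qdg L X hfund q ((qT L X hfund q)^[n] z)

/-- The sequence of Bob's centers determined by his initial center `x0`, his strategy `g`
(mapping Alice's moves `y_0, …, y_n` to Bob's next center `x_{n+1}`) and Alice's moves. -/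
def bobSeq {E : Type*} (x0 : E) (g : (n : ℕ) → (Fin (n + 1) → E) → E) (y : ℕ → E) : ℕ → E
  | 0 => x0
  | n + 1 => g n fun i => y i.1

/-- `S` is `(α,β)`-losing for Schmidt's game on `X`: for some initial radius `ρ > 0`,
Bob has a strategy (an initial center `x0 ∈ X` together with `g`) such that, against
every sequence of legal moves of Alice, all of Bob's moves are legal and the outcome
`ω = lim xₙ` is not in `S`.  Radii: `ρ_n = (αβ)ⁿ ρ`; Alice's move satisfies
`dist x_n y_{n+1} + α ρ_n ≤ ρ_n`; Bob's move satisfies `dist y_{n+1} x_{n+1} + ρ_{n+1} ≤ α ρ_n`. -/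
def BobWinning {E : Type*} [MetricSpace E] (X S : Set E) (α β : ℝ) : Prop :=
  ∃ ρ : ℝ, 0 < ρ ∧ ∃ x0 ∈ X, ∃ g : (n : ℕ) → (Fin (n + 1) → E) → E,
    ∀ y : ℕ → E,
      (∀ n : ℕ, y n ∈ X ∧
        dist (bobSeq x0 g y n) (y n) + α * ((α * β) ^ n * ρ) ≤ (α * β) ^ n * ρ) →
      ((∀ n : ℕ, bobSeq x0 g y (n + 1) ∈ X ∧
          dist (y n) (bobSeq x0 g y (n + 1)) + (α * β) ^ (n + 1) * ρ
            ≤ α * ((α * β) ^ n * ρ)) ∧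
        ∀ ω : E, Filter.Tendsto (bobSeq x0 g y) Filter.atTop (nhds ω) → ω ∉ S)


/-!
Let `closedBall ζ ρ ⊆ 𝒳`. If `c = q^(n-1) d₀ + ⋯ + d_(n-1)` is the value of a string of lattice
points, then every `z` with `‖q^k z - c_k - ζ‖ ≤ ρ` for all prefixes `c_k` of the string has
`d₀, …, d_(n-1)` as its first digits. The last of these conditions describes a ball of radius
`ρ |q|⁻ⁿ = (αβ)ⁿ ρ`, which is exactly Bob's radius at stage `n`. So Bob plays these cylinder balls,
appending after each move of Alice a digit within a fixed distance `K` of where her (rescaled)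
center lies; as `𝒳` is bounded, such a digit of norm `> t` always exists. Bob's moves are legal
once `β (K + ρ) ≤ ρ`, whence `C_t = (K + ρ) / ρ`.
-/

open Metric Filter Topology
open scoped Quaternion

theorem exists_mem_le_norm_and_norm_sub_le {E : Type*} [NormedAddCommGroup E] [NormedSpace ℝ E]
    [Nontrivial E] {L X : Set E} (hfund : ∀ w, ∃ d ∈ L, w - d ∈ X) {R : ℝ}
    (hR : ∀ x ∈ X, ‖x‖ ≤ R) {s : ℝ} (hs : 0 ≤ s) (v : E) :
    ∃ d ∈ L, s - R ≤ ‖d‖ ∧ ‖v - d‖ ≤ s + R := by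
  -- push `v` a distance `s` away from the origin, then translate the result into `X`
  obtain ⟨a, ha, hva⟩ : ∃ a : E, ‖a‖ = s ∧ s ≤ ‖v + a‖ := by
    obtain ⟨a, ha⟩ := exists_norm_eq E hs
    by_cases h : s ≤ ‖v + a‖
    · exact ⟨a, ha, h⟩
    · have htri : ‖a + a‖ ≤ ‖v + a‖ + ‖v + -a‖ := by
        simpa using norm_sub_le (v + a) (v + -a)
      rw [← two_smul ℝ a, norm_smul, ha, Real.norm_two] at htri
      exact ⟨-a, by rw [norm_neg, ha], by linarith⟩
  obtain ⟨d, hdL, hdX⟩ := hfund (v + a)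
  have hvad : ‖v + a - d‖ ≤ R := hR _ hdX
  refine ⟨d, hdL, by linarith [norm_sub_norm_le (v + a) d], ?_⟩
  calc ‖v - d‖ = ‖(v + a - d) - a‖ := by congr 1; abel
    _ ≤ ‖v + a - d‖ + ‖a‖ := norm_sub_le _ _
    _ ≤ s + R := by linarith

theorem pow_mul_pow_mul_of_mul_eq_one {M : Type*} [CommMonoid M] {a b : M} (h : a * b = 1)
    (n : ℕ) (c : M) : a ^ n * (b ^ n * c) = c := by
  rw [← mul_assoc, ← mul_pow, h, one_pow, one_mul]

section NestedBalls

variable {E : Type*} [PseudoMetricSpace E] {x : ℕ → E} {r : ℕ → ℝ}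

theorem antitone_closedBall_of_add_dist_le
    (h : ∀ n, r (n + 1) + dist (x (n + 1)) (x n) ≤ r n) :
    Antitone fun n => closedBall (x n) (r n) :=
  antitone_nat_of_succ_le fun n => closedBall_subset_closedBall' (h n)

theorem mem_closedBall_of_tendsto_of_antitone (hanti : Antitone fun n => closedBall (x n) (r n))
    (hr : ∀ n, 0 ≤ r n) {ω : E} (hω : Tendsto x atTop (𝓝 ω)) (n : ℕ) :
    ω ∈ closedBall (x n) (r n) :=
  isClosed_closedBall.mem_of_tendsto hω <|
    (eventually_ge_atTop n).mono fun _ hk => hanti hk (mem_closedBall_self (hr _))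

end NestedBalls

section Digits

variable {L : AddSubgroup ℍ[ℝ]} {X : Set ℍ[ℝ]} (hfund : ∀ w : ℍ[ℝ], ∃! d, d ∈ L ∧ w - d ∈ X)

theorem qdg_eq_of_mem {q w d : ℍ[ℝ]} (hd : d ∈ L) (h : q * w - d ∈ X) :
    qdg L X hfund q w = d :=
  ((hfund (q * w)).choose_spec.2 d ⟨hd, h⟩).symm

theorem qdig_eq_of_forall_pow_mul_sub_mem {q z : ℍ[ℝ]} {c d : ℕ → ℍ[ℝ]} (hc0 : c 0 = 0)
    (hc : ∀ n, c (n + 1) = q * c n + d n) (hd : ∀ n, d n ∈ L)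
    (hz : ∀ n, q ^ n * z - c n ∈ X) (n : ℕ) : qdig L X hfund q n z = d n := by
  have hstep : ∀ n, qdg L X hfund q (q ^ n * z - c n) = d n := fun n =>
    qdg_eq_of_mem hfund (hd n) (by convert hz (n + 1) using 1; rw [hc, pow_succ']; noncomm_ring)
  have hiter : ∀ n, (qT L X hfund q)^[n] z = q ^ n * z - c n := by
    intro n
    induction n with
    | zero => simp [hc0]
    | succ n ih =>
      rw [Function.iterate_succ_apply', ih, qT, hstep, hc, pow_succ']
      noncomm_ring
  rw [qdig, hiter, hstep]

end Digits

section Strategy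

variable {𝕜 : Type*} [NormedDivisionRing 𝕜] (q ζ : 𝕜) (D : 𝕜 → 𝕜)

/-- After Alice's moves `y₀, …, y_(n-1)`, the value `c_n` of the digits Bob has committed to:
the next digit is `D` of the rescaled position `q (qⁿ y_n - c_n) - ζ` of Alice's center. -/
def bobPrefix : (n : ℕ) → (Fin n → 𝕜) → 𝕜
  | 0, _ => 0
  | n + 1, ys =>
    q * bobPrefix n (Fin.init ys) +
      D (q * (q ^ n * ys (Fin.last n) - bobPrefix n (Fin.init ys)) - ζ)

def bobCenter (n : ℕ) (ys : Fin n → 𝕜) : 𝕜 :=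
  (q ^ n)⁻¹ * (ζ + bobPrefix q ζ D n ys)

def bobStrategy (n : ℕ) (ys : Fin (n + 1) → 𝕜) : 𝕜 :=
  bobCenter q ζ D (n + 1) ys

theorem bobSeq_bobStrategy (y : ℕ → 𝕜) (n : ℕ) :
    bobSeq ζ (bobStrategy q ζ D) y n = bobCenter q ζ D n fun i => y i := by
  cases n with
  | zero => simp [bobSeq, bobCenter, bobPrefix]
  | succ n => rfl

theorem bobPrefix_succ_seq (y : ℕ → 𝕜) (n : ℕ) :
    (bobPrefix q ζ D (n + 1) fun i => y i) =
      q * (bobPrefix q ζ D n fun i => y i) +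
        D (q * (q ^ n * y n - bobPrefix q ζ D n fun i => y i) - ζ) :=
  rfl

variable {q}

theorem pow_mul_sub_bobCenter (hq : q ≠ 0) (n : ℕ) (ys : Fin n → 𝕜) (z : 𝕜) :
    q ^ n * (z - bobCenter q ζ D n ys) = q ^ n * z - bobPrefix q ζ D n ys - ζ := by
  rw [bobCenter, mul_sub, mul_inv_cancel_left₀ (pow_ne_zero n hq)]
  abel

theorem dist_bobCenter_succ_le {K r : ℝ} (hDK : ∀ v, ‖v - D v‖ ≤ K) (hqr : ‖q‖ * r = 1)
    (y : ℕ → 𝕜) (n : ℕ) : dist (y n) (bobCenter q ζ D (n + 1) fun i => y i) ≤ r ^ (n + 1) * K := by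
  have hq : q ≠ 0 := by rintro rfl; simp at hqr
  have hscaled : ‖q‖ ^ (n + 1) * dist (y n) (bobCenter q ζ D (n + 1) fun i => y i) ≤ K := by
    rw [dist_eq_norm, ← norm_pow, ← norm_mul, pow_mul_sub_bobCenter ζ D hq]
    set v := q * (q ^ n * y n - bobPrefix q ζ D n fun i => y i) - ζ
    have hv : (q ^ (n + 1) * y n - bobPrefix q ζ D (n + 1) fun i => y i) - ζ = v - D v := by
      rw [bobPrefix_succ_seq, pow_succ', mul_assoc]
      simp only [v, mul_sub]
      abel
    exact hv ▸ hDK v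
  exact le_of_mul_le_mul_left (hscaled.trans_eq (pow_mul_pow_mul_of_mul_eq_one hqr _ K).symm)
    (pow_pos (norm_pos_iff.2 hq) _)

end Strategy

theorem bobWinning_setOf_exists_norm_qdig_le {L : AddSubgroup ℍ[ℝ]} {X : Set ℍ[ℝ]}
    (hfund : ∀ w : ℍ[ℝ], ∃! d, d ∈ L ∧ w - d ∈ X) {ζ : ℍ[ℝ]} {ρ : ℝ} (hρ : 0 < ρ)
    (hball : closedBall ζ ρ ⊆ X) {D : ℍ[ℝ] → ℍ[ℝ]} {t K : ℝ} (hDL : ∀ v, D v ∈ L)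
    (hDt : ∀ v, t < ‖D v‖) (hDK : ∀ v, ‖v - D v‖ ≤ K) {q : ℍ[ℝ]} {α β : ℝ} (hα : 0 ≤ α)
    (hqαβ : ‖q‖ * (α * β) = 1) (hβ : β * (K + ρ) ≤ ρ) :
    BobWinning X {z | z ∈ X ∧ ∃ m : ℕ, ‖qdig L X hfund q m z‖ ≤ t} α β := by
  have hq : q ≠ 0 := by rintro rfl; simp at hqαβ
  have hαβ : 0 < α * β := pos_of_mul_pos_right (hqαβ ▸ one_pos) (norm_nonneg q)
  refine ⟨ρ, hρ, ζ, hball (mem_closedBall_self hρ.le), bobStrategy q ζ D, fun y hy => ?_⟩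
  set x := bobSeq ζ (bobStrategy q ζ D) y
  have hbob : ∀ n, dist (y n) (x (n + 1)) + (α * β) ^ (n + 1) * ρ ≤ α * ((α * β) ^ n * ρ) := by
    intro n
    have hstep : dist (y n) (x (n + 1)) ≤ (α * β) ^ (n + 1) * K :=
      dist_bobCenter_succ_le ζ D hDK hqαβ y n
    have hshrink : (α * β) ^ (n + 1) * (K + ρ) ≤ α * ((α * β) ^ n * ρ) := by
      calc (α * β) ^ (n + 1) * (K + ρ) = α * (α * β) ^ n * (β * (K + ρ)) := by ring
        _ ≤ α * (α * β) ^ n * ρ := by gcongr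
        _ = α * ((α * β) ^ n * ρ) := by ring
    linarith
  have hanti : Antitone fun n => closedBall (x n) ((α * β) ^ n * ρ) :=
    antitone_closedBall_of_add_dist_le fun n => by
      linarith [dist_triangle (x (n + 1)) (y n) (x n), dist_comm (x n) (y n),
        dist_comm (x (n + 1)) (y n), (hy n).2, hbob n]
  refine ⟨fun n => ⟨hball ?_, hbob n⟩, fun ω hω hωS => ?_⟩
  · simpa [x, bobSeq] using
      hanti (Nat.zero_le (n + 1)) (mem_closedBall_self (by positivity))
  · obtain ⟨-, m, hm⟩ := hωS
    have hωX : ∀ n, q ^ n * ω - (bobPrefix q ζ D n fun i => y i) ∈ X := fun n => by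
      apply hball
      have hωn := mem_closedBall_of_tendsto_of_antitone hanti (fun n => by positivity) hω n
      rw [mem_closedBall, dist_eq_norm, show x n = _ from bobSeq_bobStrategy q ζ D y n] at hωn
      rw [mem_closedBall, dist_eq_norm, ← pow_mul_sub_bobCenter ζ D hq, norm_mul, norm_pow]
      calc ‖q‖ ^ n * ‖ω - bobCenter q ζ D n fun i => y i‖
          ≤ ‖q‖ ^ n * ((α * β) ^ n * ρ) := by gcongr
        _ = ρ := pow_mul_pow_mul_of_mul_eq_one hqαβ n ρ
    rw [qdig_eq_of_forall_pow_mul_sub_mem hfund rfl (bobPrefix_succ_seq q ζ D y)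
      (fun n => hDL _) hωX m] at hm
    exact (hDt _).not_ge hm

theorem stmt18_general (L : AddSubgroup (Quaternion ℝ)) (X : Set (Quaternion ℝ))
    (hbd : Bornology.IsBounded X)
    (hfund : ∀ w : Quaternion ℝ, ∃! d, d ∈ L ∧ w - d ∈ X)
    (hint : ∃ ζ ∈ interior X, ζ ≠ 0)
    (t : ℝ) (ht : 0 ≤ t) :
    ∃ Ct : ℝ, 0 < Ct ∧
      ∀ q : Quaternion ℝ, 1 < ‖q‖ →
        ∀ α β : ℝ, α ∈ Set.Ioo (0 : ℝ) 1 → β ∈ Set.Ioo (0 : ℝ) 1 →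
          α * β * ‖q‖ = 1 → Ct * β ≤ 1 →
          BobWinning X
            {z | z ∈ X ∧ ∃ m : ℕ, ‖qdig L X hfund q m z‖ ≤ t} α β := by
  obtain ⟨ζ, hζ, -⟩ := hint
  obtain ⟨ρ, hρ, hball⟩ := nhds_basis_closedBall.mem_iff.1 (mem_interior_iff_mem_nhds.1 hζ)
  obtain ⟨R, hR⟩ := hbd.exists_norm_le
  have hR0 : 0 ≤ R := (norm_nonneg ζ).trans (hR ζ (interior_subset hζ))
  choose D hDL hDt hDK using exists_mem_le_norm_and_norm_sub_le (L := L)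
    (fun w => (hfund w).exists) hR (s := t + R + 1) (by positivity)
  refine ⟨(t + 2 * R + 1 + ρ) / ρ, by positivity, fun q _ α β hα _ hαβq hC => ?_⟩
  refine bobWinning_setOf_exists_norm_qdig_le (K := t + 2 * R + 1) hfund hρ hball hDL
    (fun v => by linarith [hDt v]) (fun v => (hDK v).trans_eq (by ring)) hα.1.le (by linarith) ?_
  rwa [div_mul_eq_mul_div, div_le_one hρ, mul_comm] at hC

/-- For `t ≥ 0` there is a constant `C_t > 0` such that: for every quaternion base `q`
with `|q| > 1` and all `α, β ∈ (0,1)` with `αβ|q| = 1` and `C_t β ≤ 1`, the set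
`{z ∈ 𝒳 : some digit d of 𝕕_q(z) satisfies |d| ≤ t}` is `(α,β)`-losing. -/
theorem stmt18 (L : AddSubgroup (Quaternion ℝ)) (X : Set (Quaternion ℝ))
    (hbd : Bornology.IsBounded X) (h0L : (0 : Quaternion ℝ) ∈ L)
    (h0X : (0 : Quaternion ℝ) ∈ X)
    (hfund : ∀ w : Quaternion ℝ, ∃! d, d ∈ L ∧ w - d ∈ X)
    (hint : ∃ ζ ∈ interior X, ζ ≠ 0)
    (t : ℝ) (ht : 0 ≤ t) :
    ∃ Ct : ℝ, 0 < Ct ∧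
      ∀ q : Quaternion ℝ, 1 < ‖q‖ →
        ∀ α β : ℝ, α ∈ Set.Ioo (0 : ℝ) 1 → β ∈ Set.Ioo (0 : ℝ) 1 →
          α * β * ‖q‖ = 1 → Ct * β ≤ 1 →
          BobWinning X
            {z | z ∈ X ∧ ∃ m : ℕ, ‖qdig L X hfund q m z‖ ≤ t} α β :=
  stmt18_general L X hbd hfund hint t ht
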